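/- If U ⊆ R, R ⊆ S, R is transitive, and x ∈ (∀S.C)^I, then for every y with (x,y) ∈ U we have y ∈ (∀R.C)^I. -/
import Mathlib

theorem stmt_17 {Δ : Type*} (U R S : Set (Δ × Δ)) (C : Set Δ)
    (hUR : U ⊆ R) (hRS : R ⊆ S)
    (htrans : ∀ x y z, (x, y) ∈ R → (y, z) ∈ R → (x, z) ∈ R)
    (x : Δ) (hx : x ∈ {x | ∀ y, (x, y) ∈ S → y ∈ C}) :
    ∀ y, (x, y) ∈ U → y ∈ {y | ∀ z, (y, z) ∈ R → z ∈ C} := by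
  intro y hy z hz
  exact hx z (hRS (htrans x y z (hUR hy) hz))
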